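/- Let p be a prime, K = F_p, k ≥ 1, and let A be a connected graded K-algebra with A_n = 0 for all n ≥ 3, with a basis {a_1, …, a_{2k}} of A_1 and a basis {e} of A_2, whose multiplication on basis elements is given by a_{2l−1}·a_{2l} = e and a_{2l}·a_{2l−1} = −e for 1 ≤ l ≤ k, and a_i·a_j = 0 for all other pairs (i, j). (A is the mod-p cohomology algebra of a Demushkin pro-p group with invariant q ≠ 2, with its symplectic basis.) Define σ(i) = i − 1 for i even and σ(i) = i + 1 for i odd. Then: (i) for every i, the colon ideal (0) : a_i equals the left ideal of A generated by { a_j : j ≠ σ(i) }; (ii) for every nonempty subset Y ⊆ {a_1, …, a_{2k}} and every a_i ∉ Y, the colon ideal (Y) : a_i equals the augmentation ideal A_+, which is the left ideal generated by {a_1, …, a_{2k}}. In particular, A is strongly Koszul with respect to {a_1, …, a_{2k}}. -/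

import Mathlib

/-- The colon ideal `I : x = {a | a * x ∈ I}` of a left ideal `I` by an element `x`. -/
def colonIdeal {A : Type*} [Ring A] (I : Ideal A) (x : A) : Ideal A :=
  Submodule.comap (LinearMap.toSpanSingleton A A x) I

/-- The augmentation ideal `A_+` of a connected graded algebra. -/
def augIdeal {K A : Type*} [Field K] [Ring A] [Algebra K A]
    (𝒜 : ℕ → Submodule K A) : Ideal A :=
  Ideal.span (⋃ n : ℕ, ((𝒜 (n + 1) : Submodule K A) : Set A))

/-- `A` is strongly Koszul with respect to a set `X` of (homogeneous) generators of the
augmentation ideal `P`: `X` generates `P`, no proper subset of `X` generates `P`, and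
for every `Y ⊊ X` and `x ∈ X \ Y` the colon ideal `(Y) : x` is generated by a subset of
`X`. -/
def StronglyKoszulWrt {A : Type*} [Ring A] (P : Ideal A) (X : Set A) : Prop :=
  Ideal.span X = P ∧ (∀ Y ⊂ X, Ideal.span Y ≠ P) ∧
    ∀ Y ⊂ X, ∀ z ∈ X \ Y, ∃ Z ⊆ X, colonIdeal (Ideal.span Y) z = Ideal.span Z

/-- The pairing involution of the symplectic basis, in 0-based indexing:
paper-index `i` even ↦ `i − 1`, paper-index `i` odd ↦ `i + 1`. -/
def sigma18 (i : ℕ) : ℕ := if Even i then i + 1 else i - 1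

/-! Everything is read off in degree 1. In a connected graded algebra the degree-1 component
of `r * y`, for `y` of degree 1, is `r₀ * y`; hence the degree-1 part of the left ideal generated
by `Y ⊆ A₁` is the `K`-span of `Y`, and `r * aᵢ ∈ (Y)` with `aᵢ ∉ span Y` forces `r₀ = 0`, i.e.
`r ∈ A₊`. Conversely `A₊ * aᵢ ⊆ A₂ = K e`, and `e ∈ (Y)` as soon as `Y` contains some `aₘ`, since
its symplectic partner gives `a_σ(m) * aₘ = ±e`. For `Y = ∅` write `r = r₁ + r₂`: then
`r * aᵢ = ±c e` with `c` the coefficient of `a_σ(i)` in `r₁`, which vanishes exactly when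
`r ∈ (aⱼ : j ≠ σ(i))`. -/

theorem mem_colonIdeal {A : Type*} [Ring A] {I : Ideal A} {x y : A} :
    y ∈ colonIdeal I x ↔ y * x ∈ I :=
  Iff.rfl

theorem Ideal.mem_of_mem_span_of_subset {K A : Type*} [CommSemiring K] [Ring A] [Algebra K A]
    {I : Ideal A} {s : Set A} (hs : s ⊆ I) {x : A} (hx : x ∈ Submodule.span K s) : x ∈ I :=
  Submodule.span_le (p := I.restrictScalars K) |>.mpr hs hx

section LinearAlgebra

variable {K M ι : Type*} [Ring K] [AddCommGroup M] [Module K M] {a : ι → M}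

theorem exists_eq_smul_add_of_mem_span_range {v : M} (hv : v ∈ Submodule.span K (Set.range a))
    (j : ι) : ∃ t : K, ∃ z ∈ Submodule.span K (a '' {l | l ≠ j}), v = t • a j + z := by
  have hrange : Set.range a = insert (a j) (a '' {l | l ≠ j}) := by
    rw [← Set.image_insert_eq, ← Set.image_univ]
    congr 1
    ext l
    by_cases h : l = j <;> simp [h]
  exact Submodule.mem_span_insert.mp (hrange ▸ hv)

theorem LinearIndependent.notMem_span_of_subset_range [Nontrivial K] (hindep : LinearIndependent K a)
    {Y : Set M} (hY : Y ⊆ Set.range a) {i : ι} (hi : a i ∉ Y) : a i ∉ Submodule.span K Y := by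
  refine fun h => hindep.notMem_span_image (s := {j | j ≠ i}) (by simp) (Submodule.span_mono ?_ h)
  intro y hy
  obtain ⟨j, rfl⟩ := hY hy
  exact ⟨j, fun hji => hi (hji ▸ hy), rfl⟩

end LinearAlgebra

section GradedAlgebra

open DirectSum GradedAlgebra

variable {K A : Type*} [CommSemiring K] [Ring A] [Algebra K A] (𝒜 : ℕ → Submodule K A)
  [GradedAlgebra 𝒜]

theorem mul_eq_zero_of_le_add {N : ℕ} (htop : ∀ n, N ≤ n → 𝒜 n = ⊥) {i j : ℕ} {x y : A}
    (hx : x ∈ 𝒜 i) (hy : y ∈ 𝒜 j) (hij : N ≤ i + j) : x * y = 0 := by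
  simpa [htop _ hij] using SetLike.mul_mem_graded hx hy

theorem sum_range_proj {N : ℕ} (htop : ∀ n, N ≤ n → 𝒜 n = ⊥) (x : A) :
    ∑ i ∈ Finset.range N, proj 𝒜 i x = x := by
  classical
  conv_rhs => rw [← sum_support_decompose 𝒜 x]
  refine (Finset.sum_subset (fun i hi => ?_) fun i _ hi => ?_).symm
  · rw [Finset.mem_range]
    by_contra hNi
    exact (mem_support_iff 𝒜 x i).mp hi <|
      (Submodule.eq_bot_iff _).mp (htop i (not_lt.mp hNi)) _ (decompose 𝒜 x i).2
  · exact not_not.mp (mt (mem_support_iff 𝒜 x i).mpr hi)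

theorem exists_proj_one_mul_eq_smul (hconn : 𝒜 0 = 1) (r : A) {y : A} (hy : y ∈ 𝒜 1) :
    ∃ c : K, algebraMap K A c = proj 𝒜 0 r ∧ proj 𝒜 1 (r * y) = c • y := by
  have h0 : proj 𝒜 0 r ∈ (1 : Submodule K A) := hconn ▸ (decompose 𝒜 r 0).2
  obtain ⟨c, hc⟩ := Submodule.mem_one.mp h0
  refine ⟨c, hc, ?_⟩
  rw [proj_apply, coe_decompose_mul_of_right_mem_of_le 𝒜 hy le_rfl, Nat.sub_self, ← proj_apply,
    ← hc, Algebra.smul_def]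

theorem proj_one_mem_span_of_mem_idealSpan (hconn : 𝒜 0 = 1) {Y : Set A} (hY : Y ⊆ 𝒜 1)
    {x : A} (hx : x ∈ Ideal.span Y) : proj 𝒜 1 x ∈ Submodule.span K Y := by
  obtain ⟨n, f, g, rfl⟩ := Submodule.mem_span_set'.mp hx
  rw [map_sum]
  refine Submodule.sum_mem _ fun i _ => ?_
  obtain ⟨c, -, hc⟩ := exists_proj_one_mul_eq_smul 𝒜 hconn (f i) (hY (g i).2)
  rw [smul_eq_mul, hc]
  exact Submodule.smul_mem _ _ (Submodule.subset_span (g i).2)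

end GradedAlgebra

section ConnectedGraded

open DirectSum GradedAlgebra

variable {K A : Type*} [Field K] [Ring A] [Algebra K A] (𝒜 : ℕ → Submodule K A) [GradedAlgebra 𝒜]

theorem mem_augIdeal_of_proj_zero_eq_zero {r : A} (hr : proj 𝒜 0 r = 0) : r ∈ augIdeal 𝒜 := by
  classical
  rw [← sum_support_decompose 𝒜 r]
  refine Ideal.sum_mem _ fun i _ => ?_
  rcases i with _ | n
  · rw [← proj_apply, hr]
    exact zero_mem _
  · exact Ideal.subset_span (Set.mem_iUnion.mpr ⟨n, (decompose 𝒜 r (n + 1)).2⟩)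

theorem proj_zero_eq_zero_of_mul_mem_idealSpan (hconn : 𝒜 0 = 1) {Y : Set A} (hY : Y ⊆ 𝒜 1)
    {y : A} (hy : y ∈ 𝒜 1) (hyY : y ∉ Submodule.span K Y) {r : A} (hr : r * y ∈ Ideal.span Y) :
    proj 𝒜 0 r = 0 := by
  obtain ⟨c, hc0, hc1⟩ := exists_proj_one_mul_eq_smul 𝒜 hconn r hy
  have hmem := proj_one_mem_span_of_mem_idealSpan 𝒜 hconn hY hr
  rw [hc1] at hmem
  obtain rfl : c = 0 := by
    by_contra hc
    exact hyY ((Submodule.smul_mem_iff _ hc).mp hmem)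
  rw [← hc0, map_zero]

theorem idealSpan_ne_of_ssubset_range (hconn : 𝒜 0 = 1) {ι : Type*} {a : ι → A}
    (ha1 : ∀ i, a i ∈ 𝒜 1) (hindep : LinearIndependent K a) {Y : Set A}
    (hY : Y ⊂ Set.range a) : Ideal.span Y ≠ Ideal.span (Set.range a) := by
  intro hspan
  obtain ⟨_, ⟨i, rfl⟩, hi⟩ := Set.exists_of_ssubset hY
  have hmem : a i ∈ Ideal.span Y := hspan ▸ Ideal.subset_span (Set.mem_range_self i)
  have h1 := proj_one_mem_span_of_mem_idealSpan 𝒜 hconn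
    (hY.subset.trans (Set.range_subset_iff.mpr ha1)) hmem
  rw [proj_apply, decompose_of_mem_same 𝒜 (ha1 i)] at h1
  exact hindep.notMem_span_of_subset_range hY.subset hi h1

end ConnectedGraded

section Symplectic

variable {K A : Type*} [Field K] [Ring A] [Algebra K A] {k : ℕ} {a : Fin (2 * k) → A} {e : A}

def SymplecticMulTable (a : Fin (2 * k) → A) (e : A) : Prop :=
  ∀ i j : Fin (2 * k), a i * a j =
    if (j : ℕ) = (i : ℕ) + 1 ∧ Even (i : ℕ) then e
    else if (i : ℕ) = (j : ℕ) + 1 ∧ Even (j : ℕ) then -e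
    else 0

theorem sigma18_lt {i n : ℕ} (hi : i < 2 * n) : sigma18 i < 2 * n := by
  unfold sigma18
  split_ifs with h
  · rw [Nat.even_iff] at h
    omega
  · omega

def partner (i : Fin (2 * k)) : Fin (2 * k) :=
  ⟨sigma18 i, sigma18_lt i.isLt⟩

@[simp]
theorem coe_partner (i : Fin (2 * k)) : (partner i : ℕ) = sigma18 i :=
  rfl

theorem partner_ne (i : Fin (2 * k)) : partner i ≠ i := by
  simp only [Ne, Fin.ext_iff, partner, sigma18]
  split_ifs with h
  · omega
  · rw [Nat.even_iff] at h
    omega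

theorem mul_partner (hmul : SymplecticMulTable a e) (i : Fin (2 * k)) :
    a (partner i) * a i = e ∨ a (partner i) * a i = -e := by
  rw [hmul]
  simp only [partner, sigma18]
  split_ifs <;> grind

theorem mul_eq_zero_of_ne_partner (hmul : SymplecticMulTable a e) {i j : Fin (2 * k)}
    (hj : j ≠ partner i) : a j * a i = 0 := by
  simp only [Ne, Fin.ext_iff, partner, sigma18] at hj
  rw [hmul]
  split_ifs <;> grind

theorem e_mem_of_basis_mem (hmul : SymplecticMulTable a e) {I : Ideal A} {i : Fin (2 * k)}
    (hi : a i ∈ I) : e ∈ I := by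
  rcases mul_partner hmul i with h | h
  · exact h ▸ I.mul_mem_left _ hi
  · exact neg_neg e ▸ h ▸ I.neg_mem (I.mul_mem_left _ hi)

theorem basis_mul_mem_of_e_mem (hmul : SymplecticMulTable a e) {I : Ideal A} (he : e ∈ I)
    (i j : Fin (2 * k)) : a j * a i ∈ I := by
  by_cases hj : j = partner i
  · rcases mul_partner hmul i with h | h <;> rw [hj, h]
    exacts [he, I.neg_mem he]
  · rw [mul_eq_zero_of_ne_partner hmul hj]
    exact I.zero_mem

variable (𝒜 : ℕ → Submodule K A)

theorem augIdeal_eq_span_range (htop : ∀ n, 3 ≤ n → 𝒜 n = ⊥) (hk : 1 ≤ k)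
    (ha1 : ∀ i, a i ∈ 𝒜 1) (hspan1 : Submodule.span K (Set.range a) = 𝒜 1)
    (hspan2 : 𝒜 2 = Submodule.span K {e}) (hmul : SymplecticMulTable a e) :
    augIdeal 𝒜 = Ideal.span (Set.range a) := by
  have he : e ∈ Ideal.span (Set.range a) :=
    e_mem_of_basis_mem hmul (Ideal.subset_span (Set.mem_range_self ⟨0, by omega⟩))
  refine le_antisymm (Ideal.span_le.mpr ?_) (Ideal.span_le.mpr ?_)
  · intro x hx
    obtain ⟨n, hn⟩ := Set.mem_iUnion.mp hx
    rcases n with _ | _ | n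
    · exact Ideal.mem_of_mem_span_of_subset Ideal.subset_span (hspan1 ▸ hn)
    · exact Ideal.mem_of_mem_span_of_subset (Set.singleton_subset_iff.mpr he) (hspan2 ▸ hn)
    · rw [(Submodule.eq_bot_iff _).mp (htop _ (by omega)) x hn]
      exact zero_mem _
  · rintro _ ⟨i, rfl⟩
    exact Ideal.subset_span (Set.mem_iUnion.mpr ⟨0, ha1 i⟩)

open DirectSum GradedAlgebra

variable [GradedAlgebra 𝒜]

theorem colonIdeal_bot_eq_span_ne_partner (hconn : 𝒜 0 = 1) (htop : ∀ n, 3 ≤ n → 𝒜 n = ⊥)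
    (ha1 : ∀ i, a i ∈ 𝒜 1) (hindep : LinearIndependent K a)
    (hspan1 : Submodule.span K (Set.range a) = 𝒜 1) (hene : e ≠ 0)
    (hspan2 : 𝒜 2 = Submodule.span K {e}) (hmul : SymplecticMulTable a e) (i : Fin (2 * k)) :
    colonIdeal ⊥ (a i) = Ideal.span (a '' {j | j ≠ partner i}) := by
  set S := Ideal.span (a '' {j | j ≠ partner i})
  have hS : S ≤ colonIdeal ⊥ (a i) := by
    refine Ideal.span_le.mpr ?_
    rintro _ ⟨j, hj, rfl⟩
    exact mem_colonIdeal.mpr (mul_eq_zero_of_ne_partner hmul hj)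
  refine le_antisymm (fun r hr => ?_) hS
  have hr0 : r * a i = 0 := mem_colonIdeal.mp hr
  have h0 : proj 𝒜 0 r = 0 :=
    proj_zero_eq_zero_of_mul_mem_idealSpan 𝒜 hconn (Set.empty_subset _) (ha1 i)
      (by simpa using hindep.ne_zero i) (by simpa using hr0)
  have h1 : proj 𝒜 1 r ∈ Submodule.span K (Set.range a) := hspan1 ▸ (decompose 𝒜 r 1).2
  obtain ⟨t, z, hz, h1⟩ := exists_eq_smul_add_of_mem_span_range h1 (partner i)
  have hzS : z ∈ S := Ideal.mem_of_mem_span_of_subset Ideal.subset_span hz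
  have hr : r = t • a (partner i) + z + proj 𝒜 2 r := by
    rw [← h1]
    simpa only [Finset.sum_range_succ, Finset.sum_range_zero, h0, zero_add] using
      (sum_range_proj 𝒜 htop r).symm
  have ht : t • (a (partner i) * a i) = 0 := by
    have hz0 : z * a i = 0 := mem_colonIdeal.mp (hS hzS)
    have h20 : proj 𝒜 2 r * a i = 0 :=
      mul_eq_zero_of_le_add 𝒜 htop (decompose 𝒜 r 2).2 (ha1 i) le_rfl
    rw [← hr0, hr, add_mul, add_mul, hz0, h20, smul_mul_assoc, add_zero, add_zero]
  obtain rfl : t = 0 := by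
    rcases mul_partner hmul i with h | h <;> simpa [h, hene] using ht
  have heS : e ∈ S := e_mem_of_basis_mem hmul (Ideal.subset_span ⟨i, (partner_ne i).symm, rfl⟩)
  have h2 : proj 𝒜 2 r ∈ Submodule.span K {e} := hspan2 ▸ (decompose 𝒜 r 2).2
  rw [hr, zero_smul, zero_add]
  exact S.add_mem hzS (Ideal.mem_of_mem_span_of_subset (Set.singleton_subset_iff.mpr heS) h2)

theorem colonIdeal_span_eq_augIdeal (hconn : 𝒜 0 = 1) (htop : ∀ n, 3 ≤ n → 𝒜 n = ⊥)
    (hk : 1 ≤ k) (ha1 : ∀ i, a i ∈ 𝒜 1) (hindep : LinearIndependent K a)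
    (hspan1 : Submodule.span K (Set.range a) = 𝒜 1) (hspan2 : 𝒜 2 = Submodule.span K {e})
    (hmul : SymplecticMulTable a e) (Y : Set A) (hY : Y ⊆ Set.range a) (hne : Y.Nonempty)
    (i : Fin (2 * k)) (hi : a i ∉ Y) : colonIdeal (Ideal.span Y) (a i) = augIdeal 𝒜 := by
  refine le_antisymm (fun r hr => mem_augIdeal_of_proj_zero_eq_zero 𝒜 ?_) ?_
  · exact proj_zero_eq_zero_of_mul_mem_idealSpan 𝒜 hconn
      (hY.trans (Set.range_subset_iff.mpr ha1)) (ha1 i)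
      (hindep.notMem_span_of_subset_range hY hi) hr
  obtain ⟨y, hy⟩ := hne
  obtain ⟨m, rfl⟩ := hY hy
  have he : e ∈ Ideal.span Y := e_mem_of_basis_mem hmul (Ideal.subset_span hy)
  rw [augIdeal_eq_span_range 𝒜 htop hk ha1 hspan1 hspan2 hmul, Ideal.span_le]
  rintro _ ⟨j, rfl⟩
  exact mem_colonIdeal.mpr (basis_mul_mem_of_e_mem hmul he i j)

end Symplectic

theorem stmt18_general (p : ℕ) [Fact p.Prime] {A : Type*} [Ring A] [Algebra (ZMod p) A]
    (𝒜 : ℕ → Submodule (ZMod p) A) [GradedAlgebra 𝒜]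
    (hconn : 𝒜 0 = 1)
    (htop : ∀ n, 3 ≤ n → 𝒜 n = ⊥)
    (k : ℕ) (hk : 1 ≤ k)
    (a : Fin (2 * k) → A) (ha1 : ∀ i, a i ∈ 𝒜 1)
    (hindep : LinearIndependent (ZMod p) a)
    (hspan1 : Submodule.span (ZMod p) (Set.range a) = 𝒜 1)
    (e : A) (hene : e ≠ 0)
    (hspan2 : 𝒜 2 = Submodule.span (ZMod p) {e})
    (hmul : ∀ i j : Fin (2 * k), a i * a j =
      if (j : ℕ) = (i : ℕ) + 1 ∧ Even (i : ℕ) then e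
      else if (i : ℕ) = (j : ℕ) + 1 ∧ Even (j : ℕ) then -e
      else 0) :
    (∀ i : Fin (2 * k), colonIdeal (⊥ : Ideal A) (a i)
        = Ideal.span (a '' {j : Fin (2 * k) | (j : ℕ) ≠ sigma18 (i : ℕ)}))
    ∧ (∀ Y : Set A, Y ⊆ Set.range a → Y.Nonempty → ∀ i : Fin (2 * k), a i ∉ Y →
        colonIdeal (Ideal.span Y) (a i) = augIdeal 𝒜)
    ∧ augIdeal 𝒜 = Ideal.span (Set.range a)
    ∧ StronglyKoszulWrt (augIdeal 𝒜) (Set.range a) := by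
  have haug := augIdeal_eq_span_range 𝒜 htop hk ha1 hspan1 hspan2 hmul
  have hcolon_bot : ∀ i, colonIdeal ⊥ (a i)
      = Ideal.span (a '' {j : Fin (2 * k) | (j : ℕ) ≠ sigma18 (i : ℕ)}) := fun i => by
    simpa only [Fin.ne_iff_vne, coe_partner] using
      colonIdeal_bot_eq_span_ne_partner 𝒜 hconn htop ha1 hindep hspan1 hene hspan2 hmul i
  have hcolon_span :=
    colonIdeal_span_eq_augIdeal 𝒜 hconn htop hk ha1 hindep hspan1 hspan2 hmul
  refine ⟨hcolon_bot, hcolon_span, haug, haug.symm,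
    fun Y hY => haug ▸ idealSpan_ne_of_ssubset_range 𝒜 hconn ha1 hindep hY, ?_⟩
  rintro Y hY _ ⟨⟨i, rfl⟩, hi⟩
  rcases Y.eq_empty_or_nonempty with rfl | hne
  · exact ⟨_, Set.image_subset_range _ _, by rw [Ideal.span_empty, hcolon_bot i]⟩
  · exact ⟨_, subset_rfl, by rw [hcolon_span Y hY.subset hne i hi, haug]⟩

/-- Let `A` be the mod-p cohomology algebra of a Demushkin pro-p group
with invariant `q ≠ 2`: a connected graded `F_p`-algebra with `A_n = 0` for `n ≥ 3`,
a (symplectic) basis `a_1, …, a_{2k}` of `A_1` (0-based: `a 0, …, a (2k−1)`) and a basis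
`{e}` of `A_2` with `a_{2l−1}·a_{2l} = e`, `a_{2l}·a_{2l−1} = −e` and all other products
of basis vectors zero.  Then (i) `(0) : a_i = ({a_j : j ≠ σ(i)})`; (ii) for every
nonempty `Y ⊆ {a_1, …, a_{2k}}` and every `a_i ∉ Y`, `(Y) : a_i = A_+`, which is the
left ideal generated by `{a_1, …, a_{2k}}`.  In particular `A` is strongly Koszul with
respect to `{a_1, …, a_{2k}}`. -/
theorem stmt18 (p : ℕ) [Fact p.Prime] {A : Type*} [Ring A] [Algebra (ZMod p) A]
    (𝒜 : ℕ → Submodule (ZMod p) A) [GradedAlgebra 𝒜]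
    (hconn : 𝒜 0 = 1)
    (htop : ∀ n, 3 ≤ n → 𝒜 n = ⊥)
    (k : ℕ) (hk : 1 ≤ k)
    (a : Fin (2 * k) → A) (ha1 : ∀ i, a i ∈ 𝒜 1)
    (hindep : LinearIndependent (ZMod p) a)
    (hspan1 : Submodule.span (ZMod p) (Set.range a) = 𝒜 1)
    (e : A) (he2 : e ∈ 𝒜 2) (hene : e ≠ 0)
    (hspan2 : 𝒜 2 = Submodule.span (ZMod p) {e})
    (hmul : ∀ i j : Fin (2 * k), a i * a j =
      if (j : ℕ) = (i : ℕ) + 1 ∧ Even (i : ℕ) then e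
      else if (i : ℕ) = (j : ℕ) + 1 ∧ Even (j : ℕ) then -e
      else 0) :
    (∀ i : Fin (2 * k), colonIdeal (⊥ : Ideal A) (a i)
        = Ideal.span (a '' {j : Fin (2 * k) | (j : ℕ) ≠ sigma18 (i : ℕ)}))
    ∧ (∀ Y : Set A, Y ⊆ Set.range a → Y.Nonempty → ∀ i : Fin (2 * k), a i ∉ Y →
        colonIdeal (Ideal.span Y) (a i) = augIdeal 𝒜)
    ∧ augIdeal 𝒜 = Ideal.span (Set.range a)
    ∧ StronglyKoszulWrt (augIdeal 𝒜) (Set.range a) :=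
  stmt18_general p 𝒜 hconn htop k hk a ha1 hindep hspan1 e hene hspan2 hmul
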